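/- Let B, C⁻, C⁺ > 0 with C⁻ ≤ C⁺, let v ∈ L²(ℝ) with ‖v‖_{L²} ≤ B, let ξ : ℝ → ℝ be measurable with C⁻ ≤ ξ ≤ C⁺ a.e., and let u ∈ L²(ℝ). Set g(z) = min{1, e^{(C⁻/2)(B²/2 − |z|)}} with ‖g‖_{L¹} = B² + 4/C⁻. Define Q(Y) = (1/2)∫_ℝ exp(−|∫_Y^{Y'} cos²(v(s)/2) ξ(s) ds|)·u(Y')cos²(v(Y')/2)·ξ(Y') dY' and Q_x(Y) = (1/2)(∫_Y^{+∞} − ∫_{−∞}^{Y}) of the same integrand. Then ‖Q‖_{L²} ≤ (C⁺/2)·‖g‖_{L¹}·‖u‖_{L²} and ‖Q_x‖_{L²} ≤ C⁺·‖g‖_{L¹}·‖u‖_{L²}. -/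

import Mathlib

/-!
Since `cos² (x / 2) ≥ 1 - x² / 4` and `ξ ≥ C⁻`, the integral of `cos² (v / 2) ξ` over an interval
of length `|z|` is at least `C⁻ (|z| - ‖v‖₂² / 4)`. So the kernel `exp (-|∫_Y^{Y'} cos² (v / 2) ξ|)`
is dominated by `g (Y - Y')`, and `|Q|`, `|Q_x|` are bounded pointwise by `C⁺ / 2`, resp. `C⁺`,
times the convolution `g ⋆ |u|`. Young's inequality `‖g ⋆ |u|‖₂ ≤ ‖g‖₁ ‖u‖₂` (Schur's test:
Cauchy–Schwarz against the measure `g (Y - ·)`, then Tonelli) finishes the proof.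
-/

open MeasureTheory Real

noncomputable section

/-- `Q(Y)` in the transferred coordinates (at a fixed time). -/
def Qop (v ξ u : ℝ → ℝ) (Y : ℝ) : ℝ :=
  (1 / 2) * ∫ Y' : ℝ,
    Real.exp (-|∫ s in Y..Y', Real.cos (v s / 2) ^ 2 * ξ s|)
      * (u Y' * Real.cos (v Y' / 2) ^ 2 * ξ Y')

/-- `Q_x(Y)` in the transferred coordinates (at a fixed time). -/
def Qxop (v ξ u : ℝ → ℝ) (Y : ℝ) : ℝ :=
  (1 / 2) * ((∫ Y' in Set.Ioi Y,
      Real.exp (-|∫ s in Y..Y', Real.cos (v s / 2) ^ 2 * ξ s|)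
        * (u Y' * Real.cos (v Y' / 2) ^ 2 * ξ Y'))
    - ∫ Y' in Set.Iio Y,
      Real.exp (-|∫ s in Y..Y', Real.cos (v s / 2) ^ 2 * ξ s|)
        * (u Y' * Real.cos (v Y' / 2) ^ 2 * ξ Y'))

open Set
open scoped ENNReal NNReal

section

variable {α β : Type*} [MeasurableSpace α] [MeasurableSpace β] {μ : Measure α} {ν : Measure β}

theorem eLpNorm_two_sq {ε : Type*} [ENorm ε] (f : α → ε) :
    eLpNorm f 2 μ ^ 2 = ∫⁻ x, ‖f x‖ₑ ^ 2 ∂μ := by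
  simpa using eLpNorm_nnreal_pow_eq_lintegral (f := f) (μ := μ) (p := 2) two_ne_zero

theorem ENNReal.sq_lintegral_mul_le_lintegral_mul_lintegral_mul_sq {k h : β → ℝ≥0∞}
    (hk : AEMeasurable k ν) (hh : AEMeasurable h ν) :
    (∫⁻ y, k y * h y ∂ν) ^ 2 ≤ (∫⁻ y, k y ∂ν) * ∫⁻ y, k y * h y ^ 2 ∂ν := by
  have hsqrt : ∀ x : ℝ≥0∞, x ^ (2⁻¹ : ℝ) * x ^ (2⁻¹ : ℝ) = x := fun x => by
    rw [← sq, show (2⁻¹ : ℝ) = ((2 : ℕ) : ℝ)⁻¹ by norm_num,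
      ENNReal.rpow_inv_natCast_pow two_ne_zero]
  have holder := ENNReal.lintegral_mul_norm_pow_le hk (hk.mul (hh.pow_const 2))
    (p := 2⁻¹) (q := 2⁻¹) (by norm_num) (by norm_num) (by norm_num)
  have hintegrand : ∀ y, k y ^ (2⁻¹ : ℝ) * (k y * h y ^ 2) ^ (2⁻¹ : ℝ) = k y * h y := fun y => by
    rw [ENNReal.mul_rpow_of_nonneg _ _ (by norm_num), ← mul_assoc, hsqrt,
      show (2⁻¹ : ℝ) = ((2 : ℕ) : ℝ)⁻¹ by norm_num, ENNReal.pow_rpow_inv_natCast two_ne_zero]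
  simp only [Pi.mul_apply, hintegrand] at holder
  calc (∫⁻ y, k y * h y ∂ν) ^ 2
      ≤ ((∫⁻ y, k y ∂ν) ^ (2⁻¹ : ℝ) * (∫⁻ y, k y * h y ^ 2 ∂ν) ^ (2⁻¹ : ℝ)) ^ 2 := by gcongr
    _ = (∫⁻ y, k y ∂ν) * ∫⁻ y, k y * h y ^ 2 ∂ν := by
      rw [mul_pow, sq, sq, hsqrt, hsqrt]

theorem lintegral_sq_lintegral_mul_le_of_lintegral_le [SFinite μ] [SFinite ν] {k : α → β → ℝ≥0∞}
    (hk : Measurable (Function.uncurry k)) {h : β → ℝ≥0∞} (hh : AEMeasurable h ν) {A : ℝ≥0∞}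
    (hrow : ∀ x, ∫⁻ y, k x y ∂ν ≤ A) (hcol : ∀ y, ∫⁻ x, k x y ∂μ ≤ A) :
    ∫⁻ x, (∫⁻ y, k x y * h y ∂ν) ^ 2 ∂μ ≤ A ^ 2 * ∫⁻ y, h y ^ 2 ∂ν := by
  calc ∫⁻ x, (∫⁻ y, k x y * h y ∂ν) ^ 2 ∂μ
      ≤ ∫⁻ x, A * ∫⁻ y, k x y * h y ^ 2 ∂ν ∂μ := by
        refine lintegral_mono fun x => ?_
        exact (ENNReal.sq_lintegral_mul_le_lintegral_mul_lintegral_mul_sq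
          hk.of_uncurry_left.aemeasurable hh).trans (by gcongr; exact hrow x)
    _ = A * ∫⁻ y, (∫⁻ x, k x y ∂μ) * h y ^ 2 ∂ν := by
        have hprod : AEMeasurable (fun p : α × β => k p.1 p.2 * h p.2 ^ 2) (μ.prod ν) :=
          hk.aemeasurable.mul (hh.pow_const 2).comp_snd
        rw [lintegral_const_mul'' _ hprod.lintegral_prod_right', lintegral_lintegral_swap hprod]
        simp_rw [lintegral_mul_const'' _ hk.of_uncurry_right.aemeasurable]
    _ ≤ A * ∫⁻ y, A * h y ^ 2 ∂ν := by gcongr with y; exact hcol y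
    _ = A ^ 2 * ∫⁻ y, h y ^ 2 ∂ν := by
        rw [lintegral_const_mul'' _ (hh.pow_const 2), ← mul_assoc, sq]

end

theorem eLpNorm_two_lintegral_conv_le {G : Type*} [MeasurableSpace G] [AddGroup G]
    [MeasurableAdd G] [MeasurableNeg G] [MeasurableSub₂ G] {μ : Measure G} [SFinite μ]
    [μ.IsAddLeftInvariant] [μ.IsAddRightInvariant] [μ.IsNegInvariant]
    {g : G → ℝ≥0∞} (hg : Measurable g) {h : G → ℝ≥0∞} (hh : AEMeasurable h μ) :
    eLpNorm (fun x => ∫⁻ y, g (x - y) * h y ∂μ) 2 μ ≤ (∫⁻ x, g x ∂μ) * eLpNorm h 2 μ := by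
  rw [← ENNReal.pow_le_pow_left_iff two_ne_zero, mul_pow, eLpNorm_two_sq, eLpNorm_two_sq]
  simp only [enorm_eq_self]
  exact lintegral_sq_lintegral_mul_le_of_lintegral_le (k := fun x y => g (x - y))
    (hg.comp measurable_sub) hh
    (fun x => (lintegral_sub_left_eq_self g x).le) (fun y => (lintegral_sub_right_eq_self g y).le)

theorem eLpNorm_le_of_enorm_le_lintegral_conv {G E F : Type*} [MeasurableSpace G] [AddGroup G]
    [MeasurableAdd G] [MeasurableNeg G] [MeasurableSub₂ G] {μ : Measure G} [SFinite μ]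
    [μ.IsAddLeftInvariant] [μ.IsAddRightInvariant] [μ.IsNegInvariant]
    [NormedAddCommGroup E] [NormedAddCommGroup F] {f : G → E} {u : G → F} {g : G → ℝ≥0∞}
    (hg : Measurable g) (hu : AEStronglyMeasurable u μ) {c : ℝ≥0}
    (hf : ∀ x, ‖f x‖ₑ ≤ c * ∫⁻ y, g (x - y) * ‖u y‖ₑ ∂μ) :
    eLpNorm f 2 μ ≤ c * (∫⁻ x, g x ∂μ) * eLpNorm u 2 μ := calc
  eLpNorm f 2 μ ≤ c • eLpNorm (fun x => ∫⁻ y, g (x - y) * ‖u y‖ₑ ∂μ) 2 μ :=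
      eLpNorm_le_nnreal_smul_eLpNorm_of_ae_le_mul' (ae_of_all _ fun x => hf x) 2
  _ ≤ c * ((∫⁻ x, g x ∂μ) * eLpNorm u 2 μ) := by
      rw [ENNReal.smul_def, smul_eq_mul, ← eLpNorm_enorm u]
      gcongr
      exact eLpNorm_two_lintegral_conv_le hg hu.enorm
  _ = c * (∫⁻ x, g x ∂μ) * eLpNorm u 2 μ := (mul_assoc _ _ _).symm

-- The function `g` of the statement is `kernelMajorant (C⁻ / 2) (B² / 2)`.
def kernelMajorant (b c z : ℝ) : ℝ := min 1 (exp (b * (c - |z|)))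

theorem continuous_kernelMajorant (b c : ℝ) : Continuous (kernelMajorant b c) := by
  unfold kernelMajorant; fun_prop

theorem lintegral_Iic_ofReal_exp_mul {a : ℝ} (ha : 0 < a) (c : ℝ) :
    ∫⁻ x in Iic c, ENNReal.ofReal (exp (a * x)) = ENNReal.ofReal (exp (a * c) / a) := by
  rw [← ofReal_integral_eq_lintegral_ofReal (integrableOn_exp_mul_Iic ha c)
    (ae_of_all _ fun _ => (exp_pos _).le), integral_exp_mul_Iic ha]

theorem lintegral_Ioi_ofReal_exp_mul {a : ℝ} (ha : a < 0) (c : ℝ) :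
    ∫⁻ x in Ioi c, ENNReal.ofReal (exp (a * x)) = ENNReal.ofReal (-exp (a * c) / a) := by
  rw [← ofReal_integral_eq_lintegral_ofReal (integrableOn_exp_mul_Ioi ha c)
    (ae_of_all _ fun _ => (exp_pos _).le), integral_exp_mul_Ioi ha]

theorem setLIntegral_Iic_kernelMajorant_le {b c : ℝ} (hb : 0 < b) (hc : 0 ≤ c) :
    ∫⁻ z in Iic (-c), ENNReal.ofReal (kernelMajorant b c z) ≤ ENNReal.ofReal b⁻¹ := calc
  ∫⁻ z in Iic (-c), ENNReal.ofReal (kernelMajorant b c z)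
      ≤ ∫⁻ z in Iic (-c), ENNReal.ofReal (exp (b * c)) * ENNReal.ofReal (exp (b * z)) := by
        refine setLIntegral_mono' measurableSet_Iic fun z hz => ?_
        rw [← ENNReal.ofReal_mul (exp_pos _).le, ← exp_add, kernelMajorant,
          abs_of_nonpos (by linarith [hz.out])]
        exact ENNReal.ofReal_le_ofReal ((min_le_right _ _).trans_eq (by ring_nf))
  _ = ENNReal.ofReal b⁻¹ := by
        rw [lintegral_const_mul _ (by fun_prop), lintegral_Iic_ofReal_exp_mul hb,
          ← ENNReal.ofReal_mul (exp_pos _).le, mul_div, ← exp_add]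
        simp

theorem setLIntegral_Ioi_kernelMajorant_le {b c : ℝ} (hb : 0 < b) (hc : 0 ≤ c) :
    ∫⁻ z in Ioi c, ENNReal.ofReal (kernelMajorant b c z) ≤ ENNReal.ofReal b⁻¹ := calc
  ∫⁻ z in Ioi c, ENNReal.ofReal (kernelMajorant b c z)
      ≤ ∫⁻ z in Ioi c, ENNReal.ofReal (exp (b * c)) * ENNReal.ofReal (exp (-b * z)) := by
        refine setLIntegral_mono' measurableSet_Ioi fun z hz => ?_
        rw [← ENNReal.ofReal_mul (exp_pos _).le, ← exp_add, kernelMajorant,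
          abs_of_nonneg (by linarith [hz.out])]
        exact ENNReal.ofReal_le_ofReal ((min_le_right _ _).trans_eq (by ring_nf))
  _ = ENNReal.ofReal b⁻¹ := by
        rw [lintegral_const_mul _ (by fun_prop), lintegral_Ioi_ofReal_exp_mul (by linarith),
          ← ENNReal.ofReal_mul (exp_pos _).le, neg_div_neg_eq, mul_div, ← exp_add]
        simp

theorem lintegral_kernelMajorant_le {b c : ℝ} (hb : 0 < b) (hc : 0 ≤ c) :
    ∫⁻ z, ENNReal.ofReal (kernelMajorant b c z) ≤ ENNReal.ofReal (2 * c + 2 / b) := by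
  have hmid :
      ∫⁻ z in Ioc (-c) c, ENNReal.ofReal (kernelMajorant b c z) ≤ ENNReal.ofReal (2 * c) := calc
    ∫⁻ z in Ioc (-c) c, ENNReal.ofReal (kernelMajorant b c z) ≤ ∫⁻ z in Ioc (-c) c, 1 :=
        setLIntegral_mono' measurableSet_Ioc fun z _ => ENNReal.ofReal_le_one.mpr (min_le_left _ _)
    _ = ENNReal.ofReal (2 * c) := by rw [setLIntegral_one, volume_Ioc]; ring_nf
  calc ∫⁻ z, ENNReal.ofReal (kernelMajorant b c z)
      = (∫⁻ z in Iic (-c), ENNReal.ofReal (kernelMajorant b c z))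
          + ((∫⁻ z in Ioc (-c) c, ENNReal.ofReal (kernelMajorant b c z))
            + ∫⁻ z in Ioi c, ENNReal.ofReal (kernelMajorant b c z)) := by
        rw [← lintegral_union measurableSet_Ioi Ioc_disjoint_Ioi_same,
          Ioc_union_Ioi_eq_Ioi (by linarith), ← compl_Iic,
          lintegral_add_compl _ measurableSet_Iic]
    _ ≤ ENNReal.ofReal b⁻¹ + (ENNReal.ofReal (2 * c) + ENNReal.ofReal b⁻¹) := by
        gcongr
        exacts [setLIntegral_Iic_kernelMajorant_le hb hc, setLIntegral_Ioi_kernelMajorant_le hb hc]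
    _ = ENNReal.ofReal (2 * c + 2 / b) := by
        rw [← ENNReal.ofReal_add (by positivity) (by positivity),
          ← ENNReal.ofReal_add (by positivity) (by positivity)]
        ring_nf

theorem one_sub_sq_div_four_le_cos_sq_half (x : ℝ) : 1 - x ^ 2 / 4 ≤ cos (x / 2) ^ 2 := by
  nlinarith [cos_sq_add_sin_sq (x / 2), sin_sq_le_sq (x := x / 2)]

theorem sub_integral_le_intervalIntegral {w f : ℝ → ℝ} {a b c : ℝ} (hab : a ≤ b)
    (hw : IntervalIntegrable w volume a b) (hf : Integrable f) (hf0 : 0 ≤ᵐ[volume] f)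
    (hwf : ∀ᵐ s, c - f s ≤ w s) :
    c * (b - a) - ∫ s, f s ≤ ∫ s in a..b, w s := by
  have hcf : IntervalIntegrable (fun s => c - f s) volume a b :=
    intervalIntegrable_const.sub hf.intervalIntegrable
  calc c * (b - a) - ∫ s, f s ≤ c * (b - a) - ∫ s in a..b, f s := by
        rw [intervalIntegral.integral_of_le hab]
        exact sub_le_sub_left (setIntegral_le_integral hf hf0) _
    _ = ∫ s in a..b, (c - f s) := by
        rw [intervalIntegral.integral_sub intervalIntegrable_const hf.intervalIntegrable,
          intervalIntegral.integral_const, smul_eq_mul, mul_comm]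
    _ ≤ ∫ s in a..b, w s := intervalIntegral.integral_mono_ae hab hcf hw hwf

theorem sub_integral_le_abs_intervalIntegral {w f : ℝ → ℝ} {a b c : ℝ}
    (hw : IntervalIntegrable w volume a b) (hf : Integrable f) (hf0 : 0 ≤ᵐ[volume] f)
    (hwf : ∀ᵐ s, c - f s ≤ w s) :
    c * |a - b| - ∫ s, f s ≤ |∫ s in a..b, w s| := by
  rcases le_total a b with hab | hba
  · rw [abs_sub_comm, abs_of_nonneg (sub_nonneg.2 hab)]
    exact (sub_integral_le_intervalIntegral hab hw hf hf0 hwf).trans (le_abs_self _)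
  · rw [abs_of_nonneg (sub_nonneg.2 hba), intervalIntegral.integral_symm, abs_neg]
    exact (sub_integral_le_intervalIntegral hba hw.symm hf hf0 hwf).trans (le_abs_self _)

theorem exp_neg_abs_integral_le_kernelMajorant {v ξ : ℝ → ℝ} {B Cm : ℝ} (hCm : 0 ≤ Cm)
    (hv : Integrable (fun s => v s ^ 2)) (hvB : ∫ s, v s ^ 2 ≤ B ^ 2)
    (hξ : ∀ᵐ s, Cm ≤ ξ s) {Y Y' : ℝ}
    (hint : IntervalIntegrable (fun s => cos (v s / 2) ^ 2 * ξ s) volume Y Y') :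
    exp (-|∫ s in Y..Y', cos (v s / 2) ^ 2 * ξ s|)
      ≤ kernelMajorant (Cm / 2) (B ^ 2 / 2) (Y - Y') := by
  have hlower : ∀ᵐ s, Cm - Cm / 4 * v s ^ 2 ≤ cos (v s / 2) ^ 2 * ξ s := by
    filter_upwards [hξ] with s hs
    nlinarith [one_sub_sq_div_four_le_cos_sq_half (v s), sq_nonneg (cos (v s / 2))]
  have hI := sub_integral_le_abs_intervalIntegral hint (hv.const_mul (Cm / 4))
    (ae_of_all _ fun s => by positivity) hlower
  rw [integral_const_mul] at hI
  refine le_min (exp_le_one_iff.2 (neg_nonpos.2 (abs_nonneg _))) (exp_le_exp.2 ?_)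
  nlinarith [abs_nonneg (Y - Y')]

theorem intervalIntegrable_cos_sq_half_mul {v ξ : ℝ → ℝ} {C : ℝ} (hv : AEStronglyMeasurable v)
    (hξm : AEStronglyMeasurable ξ) (hξ : ∀ᵐ s, |ξ s| ≤ C) (a b : ℝ) :
    IntervalIntegrable (fun s => cos (v s / 2) ^ 2 * ξ s) volume a b := by
  have hcos : Continuous fun x : ℝ => cos (x / 2) ^ 2 := by fun_prop
  refine (intervalIntegrable_const (c := C)).mono_fun' ?_ (ae_restrict_of_ae ?_)
  · exact ((hcos.comp_aestronglyMeasurable hv).mul hξm).restrict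
  · filter_upwards [hξ] with s hs
    rw [Real.norm_eq_abs, abs_mul, abs_of_nonneg (sq_nonneg _)]
    nlinarith [cos_sq_le_one (v s / 2), abs_nonneg (ξ s), sq_nonneg (cos (v s / 2))]

theorem integral_sq_le_of_eLpNorm_le {v : ℝ → ℝ} {B : ℝ} (hB : 0 ≤ B) (hv : MemLp v 2)
    (hvB : eLpNorm v 2 volume ≤ ENNReal.ofReal B) : ∫ s, v s ^ 2 ≤ B ^ 2 := by
  rw [← ENNReal.ofReal_le_ofReal_iff (by positivity), ofReal_integral_eq_lintegral_ofReal
    hv.integrable_sq (ae_of_all _ fun _ => sq_nonneg _), ENNReal.ofReal_pow hB]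
  calc ∫⁻ s, ENNReal.ofReal (v s ^ 2) = eLpNorm v 2 volume ^ 2 := by
        rw [eLpNorm_two_sq]
        congr 1 with s
        rw [Real.enorm_eq_ofReal_abs, ← ENNReal.ofReal_pow (abs_nonneg _), sq_abs]
    _ ≤ ENNReal.ofReal B ^ 2 := by gcongr

-- The common integrand of `Qop` and `Qxop`.
def qIntegrand (v ξ u : ℝ → ℝ) (Y Y' : ℝ) : ℝ :=
  exp (-|∫ s in Y..Y', cos (v s / 2) ^ 2 * ξ s|) * (u Y' * cos (v Y' / 2) ^ 2 * ξ Y')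

theorem enorm_qIntegrand_le {v ξ u : ℝ → ℝ} {Cm Cp g Y Y' : ℝ} (hCm : 0 ≤ Cm)
    (hexp : exp (-|∫ s in Y..Y', cos (v s / 2) ^ 2 * ξ s|) ≤ g) (hξ : ξ Y' ∈ Icc Cm Cp) :
    ‖qIntegrand v ξ u Y Y'‖ₑ ≤ ENNReal.ofReal Cp * (ENNReal.ofReal g * ‖u Y'‖ₑ) := by
  obtain ⟨hCmξ, hξCp⟩ := hξ
  have hξ0 : 0 ≤ ξ Y' := hCm.trans hCmξ
  rw [Real.enorm_eq_ofReal_abs, Real.enorm_eq_ofReal_abs,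
    ← ENNReal.ofReal_mul ((exp_pos _).le.trans hexp), ← ENNReal.ofReal_mul (hξ0.trans hξCp)]
  refine ENNReal.ofReal_le_ofReal ?_
  rw [qIntegrand, abs_mul, abs_of_pos (exp_pos _), abs_mul, abs_mul,
    abs_of_nonneg (sq_nonneg (cos (v Y' / 2))), abs_of_nonneg hξ0]
  calc exp (-|∫ s in Y..Y', cos (v s / 2) ^ 2 * ξ s|) * (|u Y'| * cos (v Y' / 2) ^ 2 * ξ Y')
      ≤ g * (|u Y'| * 1 * Cp) := by
        have := cos_sq_le_one (v Y' / 2)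
        have := (exp_pos _).le.trans hexp
        gcongr
    _ = Cp * (g * |u Y'|) := by ring

theorem lintegral_enorm_qIntegrand_le {v ξ u : ℝ → ℝ} {B Cm Cp : ℝ} (hCm : 0 ≤ Cm)
    (hv : Integrable fun s => v s ^ 2) (hvB : ∫ s, v s ^ 2 ≤ B ^ 2)
    (hξ : ∀ᵐ s, ξ s ∈ Icc Cm Cp)
    (hint : ∀ a b, IntervalIntegrable (fun s => cos (v s / 2) ^ 2 * ξ s) volume a b) (Y : ℝ) :
    ∫⁻ Y', ‖qIntegrand v ξ u Y Y'‖ₑ ≤ ENNReal.ofReal Cp *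
      ∫⁻ Y', ENNReal.ofReal (kernelMajorant (Cm / 2) (B ^ 2 / 2) (Y - Y')) * ‖u Y'‖ₑ := by
  rw [← lintegral_const_mul' _ _ ENNReal.ofReal_ne_top]
  refine lintegral_mono_ae (hξ.mono fun Y' hY' => enorm_qIntegrand_le hCm ?_ hY')
  exact exp_neg_abs_integral_le_kernelMajorant hCm hv hvB (hξ.mono fun s hs => hs.1) (hint Y Y')

theorem enorm_one_half : ‖(1 / 2 : ℝ)‖ₑ = 2⁻¹ := by
  rw [Real.enorm_eq_ofReal (by norm_num), one_div, ENNReal.ofReal_inv_of_pos two_pos]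
  simp

theorem enorm_Qop_le {v ξ u : ℝ → ℝ} {M : ℝ → ℝ≥0∞}
    (hM : ∀ Y, ∫⁻ Y', ‖qIntegrand v ξ u Y Y'‖ₑ ≤ M Y) (Y : ℝ) :
    ‖Qop v ξ u Y‖ₑ ≤ 2⁻¹ * M Y := by
  rw [Qop, enorm_mul, enorm_one_half]
  gcongr
  exact (enorm_integral_le_lintegral_enorm _).trans (hM Y)

theorem enorm_Qxop_le {v ξ u : ℝ → ℝ} {M : ℝ → ℝ≥0∞}
    (hM : ∀ Y, ∫⁻ Y', ‖qIntegrand v ξ u Y Y'‖ₑ ≤ M Y) (Y : ℝ) :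
    ‖Qxop v ξ u Y‖ₑ ≤ M Y := by
  have half_line : ∀ s : Set ℝ, ‖∫ Y' in s, qIntegrand v ξ u Y Y'‖ₑ ≤ M Y := fun s =>
    (enorm_integral_le_lintegral_enorm _).trans ((setLIntegral_le_lintegral _ _).trans (hM Y))
  calc ‖Qxop v ξ u Y‖ₑ
      ≤ 2⁻¹ * (‖∫ Y' in Ioi Y, qIntegrand v ξ u Y Y'‖ₑ
          + ‖∫ Y' in Iio Y, qIntegrand v ξ u Y Y'‖ₑ) := by
        rw [Qxop, enorm_mul, enorm_one_half]
        gcongr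
        exact enorm_sub_le
    _ ≤ 2⁻¹ * (M Y + M Y) := by gcongr <;> exact half_line _
    _ = M Y := by
        rw [← two_mul, ← mul_assoc, ENNReal.inv_mul_cancel two_ne_zero ENNReal.ofNat_ne_top,
          one_mul]

theorem stmt_11_general (B Cm Cp : ℝ) (hB : 0 < B) (hCm : 0 < Cm)
    (v ξ u : ℝ → ℝ)
    (hv : MemLp v 2 (volume : Measure ℝ))
    (hvB : eLpNorm v 2 (volume : Measure ℝ) ≤ ENNReal.ofReal B)
    (hξm : Measurable ξ) (hξ : ∀ᵐ Y : ℝ, ξ Y ∈ Set.Icc Cm Cp)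
    (hu : MemLp u 2 (volume : Measure ℝ)) :
    eLpNorm (Qop v ξ u) 2 (volume : Measure ℝ)
        ≤ ENNReal.ofReal ((Cp / 2) * (B ^ 2 + 4 / Cm))
            * eLpNorm u 2 (volume : Measure ℝ) ∧
    eLpNorm (Qxop v ξ u) 2 (volume : Measure ℝ)
        ≤ ENNReal.ofReal (Cp * (B ^ 2 + 4 / Cm))
            * eLpNorm u 2 (volume : Measure ℝ) := by
  set g : ℝ → ℝ≥0∞ := fun z => ENNReal.ofReal (kernelMajorant (Cm / 2) (B ^ 2 / 2) z)
  have hg : Measurable g := (continuous_kernelMajorant _ _).measurable.ennreal_ofReal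
  have hgB : ∫⁻ z, g z ≤ ENNReal.ofReal (B ^ 2 + 4 / Cm) :=
    (lintegral_kernelMajorant_le (by positivity) (by positivity)).trans_eq (by
      congr 1; field_simp; ring)
  have hint := intervalIntegrable_cos_sq_half_mul hv.1 hξm.aestronglyMeasurable
    (hξ.mono fun s hs => abs_le.2 ⟨by linarith [hs.1, hs.2], hs.2⟩)
  have hM := lintegral_enorm_qIntegrand_le (u := u) hCm.le hv.integrable_sq
    (integral_sq_le_of_eLpNorm_le hB.le hv hvB) hξ hint
  have hL2 : ∀ (f : ℝ → ℝ) (c : ℝ),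
      (∀ Y, ‖f Y‖ₑ ≤ ENNReal.ofReal c * ∫⁻ Y', g (Y - Y') * ‖u Y'‖ₑ) →
      eLpNorm f 2 volume ≤ ENNReal.ofReal (c * (B ^ 2 + 4 / Cm)) * eLpNorm u 2 volume := by
    intro f c hf
    rw [ENNReal.ofReal_mul' (by positivity)]
    exact (eLpNorm_le_of_enorm_le_lintegral_conv hg hu.1 hf).trans (by gcongr; exact le_rfl)
  refine ⟨hL2 _ _ fun Y => (enorm_Qop_le hM Y).trans_eq ?_, hL2 _ _ (enorm_Qxop_le hM)⟩
  rw [← mul_assoc, ENNReal.ofReal_div_of_pos two_pos, ENNReal.ofReal_ofNat, ENNReal.div_eq_inv_mul]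

/-- `L²` bounds for `Q` and `Q_x`: with `‖g‖_{L¹} = B² + 4/C⁻`,
`‖Q‖_{L²} ≤ (C⁺/2) ‖g‖_{L¹} ‖u‖_{L²}` and `‖Q_x‖_{L²} ≤ C⁺ ‖g‖_{L¹} ‖u‖_{L²}`. -/
theorem stmt_11 (B Cm Cp : ℝ) (hB : 0 < B) (hCm : 0 < Cm) (hCp : 0 < Cp) (hle : Cm ≤ Cp)
    (v ξ u : ℝ → ℝ)
    (hv : MemLp v 2 (volume : Measure ℝ))
    (hvB : eLpNorm v 2 (volume : Measure ℝ) ≤ ENNReal.ofReal B)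
    (hξm : Measurable ξ) (hξ : ∀ᵐ Y : ℝ, ξ Y ∈ Set.Icc Cm Cp)
    (hu : MemLp u 2 (volume : Measure ℝ)) :
    eLpNorm (Qop v ξ u) 2 (volume : Measure ℝ)
        ≤ ENNReal.ofReal ((Cp / 2) * (B ^ 2 + 4 / Cm))
            * eLpNorm u 2 (volume : Measure ℝ) ∧
    eLpNorm (Qxop v ξ u) 2 (volume : Measure ℝ)
        ≤ ENNReal.ofReal (Cp * (B ^ 2 + 4 / Cm))
            * eLpNorm u 2 (volume : Measure ℝ) :=
  stmt_11_general B Cm Cp hB hCm v ξ u hv hvB hξm hξ hu
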